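/- arXiv:1411.1520 — 2 statements merged into one kernel-verified Lean document; each statement's English description precedes it below -/
import Mathlib

section
/- (Wielandt-type inequality) Let S = diag(σ₁, …, σ_m) with σ₁ ≥ ⋯ ≥ σ_m > 0 and let x, y ∈ ℝ^m be nonzero vectors. Set κ = (σ₁² − σ_m²)/(σ₁² + σ_m²) and c = |⟨x, y⟩|/(‖x‖₂ ‖y‖₂). Then |xᵀ S² y| ≤ ‖Sx‖₂ ‖Sy‖₂ · (κ + c)/(1 + κ c). -/
open Matrix Finset

/-- Purely scalar core of the Wielandt-type inequality. -/
lemma wielandt_scalar (α β r g p q M : ℝ) (hβ : 0 < β) (hβα : β ≤ α)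
    (hr : 0 < r) (hg : 0 ≤ g) (hq : |q| ≤ g) (hp : p ≤ r)
    (hA : β * (M - 2*r*q) ≤ 2*r^2 - 2*r*p)
    (hB : 2*r^2 + 2*r*p ≤ α * (M + 2*r*q))
    (hM : 2*r*g ≤ M) :
    p * ((α+β)*g + (α-β)*|q|) ≤ r * ((α-β)*g + (α+β)*|q|) := by
  have hα : 0 < α := lt_of_lt_of_le hβ hβα
  have habs : 0 ≤ |q| := abs_nonneg q
  have hq' : q ≤ |q| := le_abs_self q
  have hgq1 : 0 ≤ g + |q| := by linarith
  have hgq2 : 0 ≤ g - |q| := by linarith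
  have hrg : 0 ≤ 2*r*g := by positivity
  have h1 : 2*r*g*q ≤ 2*r*g*|q| := mul_le_mul_of_nonneg_left hq' hrg
  have h2 : 2*r*g*|q| ≤ M*|q| := mul_le_mul_of_nonneg_right hM habs
  have step1 : (M + 2*r*q)*(g - |q|) ≤ (M - 2*r*q)*(g + |q|) := by nlinarith
  have c1 : (2*r^2 + 2*r*p)*(g - |q|) ≤ (α*(M + 2*r*q))*(g - |q|) :=
    mul_le_mul_of_nonneg_right hB hgq2
  have c2 : α*((M + 2*r*q)*(g - |q|)) ≤ α*((M - 2*r*q)*(g + |q|)) :=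
    mul_le_mul_of_nonneg_left step1 hα.le
  have c3 : (β*(M - 2*r*q))*(g + |q|) ≤ (2*r^2 - 2*r*p)*(g + |q|) :=
    mul_le_mul_of_nonneg_right hA hgq1
  have d1 := mul_le_mul_of_nonneg_left c1 hβ.le
  have d2 := mul_le_mul_of_nonneg_left c2 hβ.le
  have d3 := mul_le_mul_of_nonneg_left c3 hα.le
  have H : β*((2*r^2 + 2*r*p)*(g - |q|)) ≤ α*((2*r^2 - 2*r*p)*(g + |q|)) := by nlinarith
  nlinarith [H, hr, mul_pos hr hr]

/-- Sum-level version, with signed `p`. -/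
lemma wielandt_key (m : ℕ) (σ x y : Fin m → ℝ) (α β : ℝ) (hβ : 0 < β) (hβα : β ≤ α)
    (hlo : ∀ i, β ≤ σ i ^ 2) (hhi : ∀ i, σ i ^ 2 ≤ α)
    (hx : x ≠ 0) (hy : y ≠ 0) :
    (∑ i, σ i ^ 2 * x i * y i) *
        ((α+β) * (Real.sqrt (∑ i, x i * x i) * Real.sqrt (∑ i, y i * y i))
          + (α-β) * |∑ i, x i * y i|) ≤
      (Real.sqrt (∑ i, (σ i * x i)^2) * Real.sqrt (∑ i, (σ i * y i)^2)) *
        ((α-β) * (Real.sqrt (∑ i, x i * x i) * Real.sqrt (∑ i, y i * y i))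
          + (α+β) * |∑ i, x i * y i|) := by
  obtain ⟨j, hj⟩ : ∃ j, x j ≠ 0 := Function.ne_iff.mp hx
  obtain ⟨k, hk⟩ : ∃ k, y k ≠ 0 := Function.ne_iff.mp hy
  set X := ∑ i, (σ i * x i)^2 with hXdef
  set Y := ∑ i, (σ i * y i)^2 with hYdef
  set p := ∑ i, σ i ^ 2 * x i * y i with hpdef
  set q := ∑ i, x i * y i with hqdef
  set nx := ∑ i, x i * x i with hnxdef
  set ny := ∑ i, y i * y i with hnydef
  have hσj : σ j ≠ 0 := by
    intro h; have := hlo j; rw [h] at this; simp at this; linarith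
  have hσk : σ k ≠ 0 := by
    intro h; have := hlo k; rw [h] at this; simp at this; linarith
  have hX : 0 < X := Finset.sum_pos' (fun i _ => sq_nonneg _)
    ⟨j, Finset.mem_univ j, sq_pos_of_ne_zero (mul_ne_zero hσj hj)⟩
  have hY : 0 < Y := Finset.sum_pos' (fun i _ => sq_nonneg _)
    ⟨k, Finset.mem_univ k, sq_pos_of_ne_zero (mul_ne_zero hσk hk)⟩
  have hnx : 0 < nx := Finset.sum_pos' (fun i _ => mul_self_nonneg _)
    ⟨j, Finset.mem_univ j, mul_self_pos.mpr hj⟩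
  have hny : 0 < ny := Finset.sum_pos' (fun i _ => mul_self_nonneg _)
    ⟨k, Finset.mem_univ k, mul_self_pos.mpr hk⟩
  -- Cauchy-Schwarz facts
  have hpCS : p^2 ≤ X * Y := by
    have h := Finset.sum_mul_sq_le_sq_mul_sq Finset.univ (fun i => σ i * x i) (fun i => σ i * y i)
    have hpe : p = ∑ i, (σ i * x i) * (σ i * y i) :=
      Finset.sum_congr rfl fun i _ => by ring
    rw [hpe]; exact h
  have hqCS : q^2 ≤ nx * ny := by
    have h := Finset.sum_mul_sq_le_sq_mul_sq Finset.univ x y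
    have h1 : nx = ∑ i, x i ^ 2 := Finset.sum_congr rfl fun i _ => (sq (x i)).symm
    have h2 : ny = ∑ i, y i ^ 2 := Finset.sum_congr rfl fun i _ => (sq (y i)).symm
    rw [h1, h2]; exact h
  -- pointwise bounds summed
  have hlow : ∀ e : Fin m → ℝ, β * ∑ i, (e i)^2 ≤ ∑ i, σ i ^ 2 * (e i)^2 := by
    intro e
    rw [Finset.mul_sum]
    exact Finset.sum_le_sum fun i _ => mul_le_mul_of_nonneg_right (hlo i) (sq_nonneg _)
  have hhigh : ∀ e : Fin m → ℝ, (∑ i, σ i ^ 2 * (e i)^2) ≤ α * ∑ i, (e i)^2 := by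
    intro e
    rw [Finset.mul_sum]
    exact Finset.sum_le_sum fun i _ => mul_le_mul_of_nonneg_right (hhi i) (sq_nonneg _)
  set sx := Real.sqrt X with hsxdef
  set sy := Real.sqrt Y with hsydef
  set tx := Real.sqrt nx with htxdef
  set ty := Real.sqrt ny with htydef
  have hsx2 : sx^2 = X := Real.sq_sqrt hX.le
  have hsy2 : sy^2 = Y := Real.sq_sqrt hY.le
  have htx2 : tx^2 = nx := Real.sq_sqrt hnx.le
  have hty2 : ty^2 = ny := Real.sq_sqrt hny.le
  have hsx : 0 < sx := Real.sqrt_pos.mpr hX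
  have hsy : 0 < sy := Real.sqrt_pos.mpr hY
  have hr : 0 < sx * sy := mul_pos hsx hsy
  have hg : 0 ≤ tx * ty := mul_nonneg (Real.sqrt_nonneg _) (Real.sqrt_nonneg _)
  have hq : |q| ≤ tx * ty := by
    calc |q| = Real.sqrt (q^2) := (Real.sqrt_sq_eq_abs q).symm
    _ ≤ Real.sqrt (nx * ny) := Real.sqrt_le_sqrt hqCS
    _ = tx * ty := Real.sqrt_mul hnx.le _
  -- expansions for e₋ = sy • x - sx • y and e₊ = sy • x + sx • y
  have expandA : (∑ i, σ i ^ 2 * (sy * x i - sx * y i)^2)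
      = sy^2 * X + sx^2 * Y - 2*(sx*sy)*p := by
    rw [hXdef, hYdef, hpdef, Finset.mul_sum, Finset.mul_sum, Finset.mul_sum,
      ← Finset.sum_add_distrib, ← Finset.sum_sub_distrib]
    exact Finset.sum_congr rfl fun i _ => by ring
  have expandA' : (∑ i, (sy * x i - sx * y i)^2)
      = sy^2 * nx + sx^2 * ny - 2*(sx*sy)*q := by
    rw [hnxdef, hnydef, hqdef, Finset.mul_sum, Finset.mul_sum, Finset.mul_sum,
      ← Finset.sum_add_distrib, ← Finset.sum_sub_distrib]
    exact Finset.sum_congr rfl fun i _ => by ring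
  have expandB : (∑ i, σ i ^ 2 * (sy * x i + sx * y i)^2)
      = sy^2 * X + sx^2 * Y + 2*(sx*sy)*p := by
    rw [hXdef, hYdef, hpdef, Finset.mul_sum, Finset.mul_sum, Finset.mul_sum,
      ← Finset.sum_add_distrib, ← Finset.sum_add_distrib]
    exact Finset.sum_congr rfl fun i _ => by ring
  have expandB' : (∑ i, (sy * x i + sx * y i)^2)
      = sy^2 * nx + sx^2 * ny + 2*(sx*sy)*q := by
    rw [hnxdef, hnydef, hqdef, Finset.mul_sum, Finset.mul_sum, Finset.mul_sum,
      ← Finset.sum_add_distrib, ← Finset.sum_add_distrib]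
    exact Finset.sum_congr rfl fun i _ => by ring
  have hAs := hlow (fun i => sy * x i - sx * y i)
  have hBs := hhigh (fun i => sy * x i + sx * y i)
  rw [expandA, expandA'] at hAs
  rw [expandB, expandB'] at hBs
  clear_value X Y p q nx ny sx sy tx ty
  clear hXdef hYdef hpdef hqdef hnxdef hnydef hsxdef hsydef htxdef htydef
  have hr2 : (sx*sy)^2 = X * Y := by rw [mul_pow, hsx2, hsy2]
  rw [hsx2, hsy2] at hAs hBs
  have hp : p ≤ sx * sy := by nlinarith [hpCS, hr, hr2]
  have hA : β * ((Y*nx + X*ny) - 2*(sx*sy)*q) ≤ 2*(sx*sy)^2 - 2*(sx*sy)*p := by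
    linarith [hAs, hr2]
  have hB : 2*(sx*sy)^2 + 2*(sx*sy)*p ≤ α * ((Y*nx + X*ny) + 2*(sx*sy)*q) := by
    linarith [hBs, hr2]
  have hM : 2*(sx*sy)*(tx*ty) ≤ Y*nx + X*ny := by
    rw [← hsy2, ← htx2, ← hsx2, ← hty2]
    nlinarith [sq_nonneg (sy*tx - sx*ty)]
  exact wielandt_scalar α β (sx*sy) (tx*ty) p q (Y*nx + X*ny) hβ hβα hr hg hq hp hA hB hM

/-- Wielandt-type inequality: For `S = diag (σ₁ ≥ ⋯ ≥ σ_m > 0)` and nonzero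
`x, y ∈ ℝ^m`, with `κ = (σ₁² − σ_m²)/(σ₁² + σ_m²)` and `c = |⟨x,y⟩|/(‖x‖₂‖y‖₂)`, one has
`|xᵀ S² y| ≤ ‖Sx‖₂ ‖Sy‖₂ (κ + c)/(1 + κ c)`. -/
theorem stmt3 (m : ℕ) (hm : 0 < m)
    (σ : Fin m → ℝ) (hσpos : ∀ i, 0 < σ i) (hσmono : ∀ i j : Fin m, i ≤ j → σ j ≤ σ i)
    (x y : Fin m → ℝ) (hx : x ≠ 0) (hy : y ≠ 0) :
    |∑ i, (σ i) ^ 2 * x i * y i| ≤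
      Real.sqrt (∑ i, (σ i * x i) ^ 2) * Real.sqrt (∑ i, (σ i * y i) ^ 2) *
      (((σ ⟨0, hm⟩ ^ 2 - σ ⟨m - 1, by omega⟩ ^ 2) / (σ ⟨0, hm⟩ ^ 2 + σ ⟨m - 1, by omega⟩ ^ 2) +
          |x ⬝ᵥ y| / (Real.sqrt (x ⬝ᵥ x) * Real.sqrt (y ⬝ᵥ y))) /
        (1 + (σ ⟨0, hm⟩ ^ 2 - σ ⟨m - 1, by omega⟩ ^ 2) / (σ ⟨0, hm⟩ ^ 2 + σ ⟨m - 1, by omega⟩ ^ 2) *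
          (|x ⬝ᵥ y| / (Real.sqrt (x ⬝ᵥ x) * Real.sqrt (y ⬝ᵥ y))))) := by
  simp only [dotProduct]
  set i0 : Fin m := ⟨0, hm⟩
  set i1 : Fin m := ⟨m - 1, by omega⟩
  set α := σ i0 ^ 2 with hαdef
  set β := σ i1 ^ 2 with hβdef
  have hβ : 0 < β := pow_pos (hσpos i1) 2
  have hβα : β ≤ α := by
    have h := hσmono i0 i1 (by simp [i0, i1, Fin.le_def])
    exact pow_le_pow_left₀ (hσpos i1).le h 2
  have hlo : ∀ i, β ≤ σ i ^ 2 := fun i =>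
    pow_le_pow_left₀ (hσpos i1).le (hσmono i i1 (by simp [i1, Fin.le_def]; omega)) 2
  have hhi : ∀ i, σ i ^ 2 ≤ α := fun i =>
    pow_le_pow_left₀ (hσpos i).le (hσmono i0 i (by simp [i0, Fin.le_def])) 2
  have h1 := wielandt_key m σ x y α β hβ hβα hlo hhi hx hy
  have h2 := wielandt_key m σ x (fun i => -y i) α β hβ hβα hlo hhi hx
    (by intro h; apply hy; funext i; have := congrFun h i; simpa using this)
  simp only [mul_neg, neg_mul, neg_neg, neg_sq, neg_mul_neg, Finset.sum_neg_distrib,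
    abs_neg] at h2
  obtain ⟨j, hj⟩ : ∃ j, x j ≠ 0 := Function.ne_iff.mp hx
  obtain ⟨k, hk⟩ : ∃ k, y k ≠ 0 := Function.ne_iff.mp hy
  have hnx : 0 < ∑ i, x i * x i := Finset.sum_pos' (fun i _ => mul_self_nonneg _)
    ⟨j, Finset.mem_univ j, mul_self_pos.mpr hj⟩
  have hny : 0 < ∑ i, y i * y i := Finset.sum_pos' (fun i _ => mul_self_nonneg _)
    ⟨k, Finset.mem_univ k, mul_self_pos.mpr hk⟩
  set p := ∑ i, σ i ^ 2 * x i * y i with hpd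
  set q := ∑ i, x i * y i with hqd
  set r := Real.sqrt (∑ i, (σ i * x i)^2) * Real.sqrt (∑ i, (σ i * y i)^2) with hrd
  set g := Real.sqrt (∑ i, x i * x i) * Real.sqrt (∑ i, y i * y i) with hgd
  have hg : 0 < g := mul_pos (Real.sqrt_pos.mpr hnx) (Real.sqrt_pos.mpr hny)
  have hr0 : 0 ≤ r := mul_nonneg (Real.sqrt_nonneg _) (Real.sqrt_nonneg _)
  clear_value p q r g
  have habsq : 0 ≤ |q| := abs_nonneg q
  have hαβ : 0 < α + β := by linarith
  have hD : 0 < (α+β)*g + (α-β)*|q| := by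
    have h3 : 0 < (α+β)*g := mul_pos hαβ hg
    nlinarith [mul_nonneg (by linarith : (0:ℝ) ≤ α - β) habsq]
  have hPD : |p| * ((α+β)*g + (α-β)*|q|) ≤ r * ((α-β)*g + (α+β)*|q|) := by
    rcases abs_cases p with ⟨h, _⟩ | ⟨h, _⟩
    · rw [h]; exact h1
    · rw [h]; linarith [h2]
  have hne1 : (α + β) ≠ 0 := hαβ.ne'
  have hne2 : g ≠ 0 := hg.ne'
  have hc : 0 ≤ (α - β) / (α + β) * (|q| / g) :=
    mul_nonneg (div_nonneg (by linarith) hαβ.le) (div_nonneg habsq hg.le)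
  have hden : (0:ℝ) < 1 + (α - β) / (α + β) * (|q| / g) := by linarith
  have hE : (((α - β) / (α + β) + |q| / g) / (1 + (α - β) / (α + β) * (|q| / g)))
      = ((α-β)*g + (α+β)*|q|) / ((α+β)*g + (α-β)*|q|) := by
    rw [div_eq_div_iff hden.ne' hD.ne']
    field_simp
  rw [hE, mul_div_assoc', le_div_iff₀ hD]
  exact hPD
end

section
/- Let A ∈ ℝ^{m×n} with m < n, nonzero columns, and μ(A) < 1. Suppose that exactly one pair (i₀, j₀), i₀ < j₀, achieves I(α_{i₀}, α_{j₀}) = μ(A), and that the derivative B_{i₀j₀} := f'_{i₀j₀}(0) of f_{i₀j₀}(ε) = ⟨P_ε α_{i₀}, P_ε α_{j₀}⟩² − μ(A)²‖P_ε α_{i₀}‖₂²‖P_ε α_{j₀}‖₂² at ε = 0 is nonzero, where P_ε = I_m + ε E_{m,1}. Then there exists ε ≠ 0 such that μ(P_ε A) < μ(A); in particular μ_e(A) < μ(A). -/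
open Matrix

/-- Normalized absolute inner product `I(x,y) = |⟨x,y⟩| / (‖x‖₂‖y‖₂)`. -/
noncomputable def nip {m : ℕ} (x y : Fin m → ℝ) : ℝ :=
  |x ⬝ᵥ y| / (Real.sqrt (x ⬝ᵥ x) * Real.sqrt (y ⬝ᵥ y))

/-- Mutual coherence of a matrix. -/
noncomputable def mutualCoherence {m n : ℕ} (A : Matrix (Fin m) (Fin n) ℝ) : ℝ :=
  ⨆ p : {p : Fin n × Fin n // p.1 ≠ p.2},
    nip (fun i => A i p.1.1) (fun i => A i p.1.2)

/-- The essential mutual coherence: the infimum of `μ(P A)` over invertible `P`. -/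
noncomputable def essMutualCoherence {m n : ℕ} (A : Matrix (Fin m) (Fin n) ℝ) : ℝ :=
  ⨅ P : GL (Fin m) ℝ, mutualCoherence ((P : Matrix (Fin m) (Fin m) ℝ) * A)

/- ### Auxiliary lemmas -/

lemma nip_nonneg' {m : ℕ} (x y : Fin m → ℝ) : 0 ≤ nip x y := by
  unfold nip; positivity

lemma dot_self_nonneg' {m : ℕ} (x : Fin m → ℝ) : 0 ≤ x ⬝ᵥ x :=
  Finset.sum_nonneg fun _ _ => mul_self_nonneg _

lemma dot_self_pos' {m : ℕ} {x : Fin m → ℝ} (hx : x ≠ 0) : 0 < x ⬝ᵥ x :=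
  lt_of_le_of_ne (dot_self_nonneg' x) fun h => hx (dotProduct_self_eq_zero.mp h.symm)

lemma abs_dot_le' {m : ℕ} (x y : Fin m → ℝ) :
    |x ⬝ᵥ y| ≤ Real.sqrt (x ⬝ᵥ x) * Real.sqrt (y ⬝ᵥ y) := by
  have h := Finset.sum_mul_sq_le_sq_mul_sq Finset.univ x y
  have h2 : (x ⬝ᵥ y)^2 ≤ (Real.sqrt (x ⬝ᵥ x) * Real.sqrt (y ⬝ᵥ y))^2 := by
    rw [mul_pow, Real.sq_sqrt (dot_self_nonneg' x), Real.sq_sqrt (dot_self_nonneg' y)]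
    simpa [dotProduct, pow_two] using h
  calc |x ⬝ᵥ y| = Real.sqrt ((x ⬝ᵥ y)^2) := (Real.sqrt_sq_eq_abs _).symm
    _ ≤ Real.sqrt ((Real.sqrt (x ⬝ᵥ x) * Real.sqrt (y ⬝ᵥ y))^2) := Real.sqrt_le_sqrt h2
    _ = Real.sqrt (x ⬝ᵥ x) * Real.sqrt (y ⬝ᵥ y) := Real.sqrt_sq (by positivity)

lemma nip_le_one' {m : ℕ} (x y : Fin m → ℝ) : nip x y ≤ 1 := by
  unfold nip
  rcases eq_or_ne (Real.sqrt (x ⬝ᵥ x) * Real.sqrt (y ⬝ᵥ y)) 0 with h | h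
  · rw [h, div_zero]; norm_num
  · exact div_le_one_of_le₀ (abs_dot_le' x y)
      (lt_of_le_of_ne (by positivity) (Ne.symm h)).le

lemma nip_comm' {m : ℕ} (x y : Fin m → ℝ) : nip x y = nip y x := by
  unfold nip; rw [dotProduct_comm, mul_comm]

lemma mutualCoherence_nonneg' {m n : ℕ} [NeZero n] (hn : 2 ≤ n)
    (B : Matrix (Fin m) (Fin n) ℝ) : 0 ≤ mutualCoherence B := by
  unfold mutualCoherence
  exact Real.iSup_nonneg fun p => nip_nonneg' _ _

lemma std_eq_col_row' {m : ℕ} (a b : Fin m) (ε : ℝ) :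
    Matrix.single a b ε = replicateCol Unit (Pi.single a ε) * replicateRow Unit ((Pi.single b 1 : Fin m → ℝ)) := by
  ext i j
  simp only [Matrix.mul_apply, Matrix.single, Matrix.of_apply, Matrix.replicateCol_apply,
    Matrix.replicateRow_apply, Finset.sum_const, Finset.card_univ, Fintype.card_unit, one_smul,
    Pi.single_apply]
  split_ifs <;> simp_all [eq_comm]

lemma single_dot_single' {m : ℕ} (a b : Fin m) (ε : ℝ) :
    (Pi.single b 1 : Fin m → ℝ) ⬝ᵥ Pi.single a ε = if b = a then ε else 0 := by
  simp only [dotProduct, Pi.single_apply]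
  rcases eq_or_ne b a with rfl | hba
  · simp
  · simp only [if_neg hba]
    apply Finset.sum_eq_zero
    intro k _
    split_ifs with h1 h2 <;> simp_all

lemma det_Peps' {m : ℕ} (a b : Fin m) (ε : ℝ) (h : |ε| < 1) :
    ((1 : Matrix (Fin m) (Fin m) ℝ) + ε • Matrix.single a b 1).det ≠ 0 := by
  have h1 : ε • Matrix.single a b (1:ℝ) = Matrix.single a b ε := by
    rw [Matrix.smul_single]; norm_num
  rw [h1, std_eq_col_row', Matrix.det_one_add_replicateCol_mul_replicateRow, single_dot_single']
  cases abs_lt.1 h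
  split_ifs <;> intro hc <;> linarith

/-- If exactly one pair `(i₀, j₀)` (with `i₀ < j₀`) of columns of `A` achieves
the mutual coherence `μ(A) < 1`, and the derivative at `ε = 0` of
`f(ε) = ⟨P_ε α_{i₀}, P_ε α_{j₀}⟩² − μ(A)²‖P_ε α_{i₀}‖²‖P_ε α_{j₀}‖²` (with
`P_ε = I + ε E_{m,1}`) is nonzero, then some `ε ≠ 0` gives `μ(P_ε A) < μ(A)`, and in
particular `μ_e(A) < μ(A)`. -/
theorem stmt16 (m n : ℕ) (hm : 0 < m) (hmn : m < n)
    (A : Matrix (Fin m) (Fin n) ℝ)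
    (hcols : ∀ j : Fin n, (fun i => A i j) ≠ 0)
    (hμ : mutualCoherence A < 1)
    (i₀ j₀ : Fin n) (hij : i₀ < j₀)
    (hmax : nip (fun r => A r i₀) (fun r => A r j₀) = mutualCoherence A)
    (huniq : ∀ i j : Fin n, i < j →
      (nip (fun r => A r i) (fun r => A r j) = mutualCoherence A ↔ (i, j) = (i₀, j₀)))
    (P : ℝ → Matrix (Fin m) (Fin m) ℝ)
    (hP : ∀ ε, P ε = 1 + ε • Matrix.single ⟨m - 1, by omega⟩ ⟨0, hm⟩ 1)
    (f : ℝ → ℝ)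
    (hf : ∀ ε, f ε =
      ((P ε).mulVec (fun r => A r i₀) ⬝ᵥ (P ε).mulVec (fun r => A r j₀)) ^ 2 -
        mutualCoherence A ^ 2 *
          (((P ε).mulVec (fun r => A r i₀) ⬝ᵥ (P ε).mulVec (fun r => A r i₀)) *
           ((P ε).mulVec (fun r => A r j₀) ⬝ᵥ (P ε).mulVec (fun r => A r j₀))))
    (hderiv : deriv f 0 ≠ 0) :
    (∃ ε : ℝ, ε ≠ 0 ∧ mutualCoherence (P ε * A) < mutualCoherence A) ∧
    essMutualCoherence A < mutualCoherence A := by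
  set μ := mutualCoherence A with hμdef
  set colA : Fin n → (Fin m → ℝ) := fun j => fun r => A r j with hcolA
  haveI : Nonempty {p : Fin n × Fin n // p.1 ≠ p.2} := ⟨⟨(i₀, j₀), ne_of_lt hij⟩⟩
  have hμ0 : 0 ≤ μ := hmax ▸ nip_nonneg' _ _
  have hbdd : BddAbove (Set.range fun p : {p : Fin n × Fin n // p.1 ≠ p.2} =>
      nip (colA p.1.1) (colA p.1.2)) := ⟨1, by rintro _ ⟨p, rfl⟩; exact nip_le_one' _ _⟩
  have hle : ∀ i j : Fin n, i ≠ j → nip (colA i) (colA j) ≤ μ := fun i j h =>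
    le_ciSup hbdd (⟨(i, j), h⟩ : {p : Fin n × Fin n // p.1 ≠ p.2})
  -- strict inequality for non-extremal pairs
  have hlt : ∀ i j : Fin n, i ≠ j → ¬(i = i₀ ∧ j = j₀) → ¬(i = j₀ ∧ j = i₀) →
      nip (colA i) (colA j) < μ := by
    intro i j hij' hb1 hb2
    refine lt_of_le_of_ne (hle i j hij') fun heq => ?_
    rcases lt_or_gt_of_ne hij' with h | h
    · have := (huniq i j h).mp heq
      exact hb1 ⟨by injection this, by injection this⟩
    · rw [nip_comm'] at heq
      have := (huniq j i h).mp heq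
      exact hb2 ⟨by injection this, by injection this⟩
  -- continuity of the quadratic forms
  have contdot : ∀ x y : Fin m → ℝ,
      Continuous (fun ε => (P ε).mulVec x ⬝ᵥ (P ε).mulVec y) := by
    intro x y
    simp only [hP, Matrix.mulVec, dotProduct]
    apply continuous_finset_sum
    intro i _
    apply Continuous.mul <;>
    · apply continuous_finset_sum
      intro k _
      simp only [Matrix.add_apply, Matrix.smul_apply, smul_eq_mul]
      fun_prop
  set G : Fin n → Fin n → ℝ → ℝ := fun i j ε =>
    ((P ε).mulVec (colA i) ⬝ᵥ (P ε).mulVec (colA j)) ^ 2 -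
      μ ^ 2 * (((P ε).mulVec (colA i) ⬝ᵥ (P ε).mulVec (colA i)) *
        ((P ε).mulVec (colA j) ⬝ᵥ (P ε).mulVec (colA j))) with hG
  have contG : ∀ i j, Continuous (G i j) := by
    intro i j
    exact ((contdot _ _).pow 2).sub
      (continuous_const.mul ((contdot _ _).mul (contdot _ _)))
  have P0 : P 0 = 1 := by rw [hP]; simp
  -- value at 0 of G for non-extremal pairs
  have G0neg : ∀ i j : Fin n, i ≠ j → ¬(i = i₀ ∧ j = j₀) → ¬(i = j₀ ∧ j = i₀) →
      G i j 0 < 0 := by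
    intro i j hij' hb1 hb2
    have hxx := dot_self_pos' (hcols i)
    have hyy := dot_self_pos' (hcols j)
    have hsx : (0:ℝ) < Real.sqrt (colA i ⬝ᵥ colA i) := Real.sqrt_pos.mpr hxx
    have hsy : (0:ℝ) < Real.sqrt (colA j ⬝ᵥ colA j) := Real.sqrt_pos.mpr hyy
    have h1 : |colA i ⬝ᵥ colA j| <
        μ * (Real.sqrt (colA i ⬝ᵥ colA i) * Real.sqrt (colA j ⬝ᵥ colA j)) := by
      have := hlt i j hij' hb1 hb2
      unfold nip at this
      exact (div_lt_iff₀ (by positivity)).mp this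
    have h2 : (colA i ⬝ᵥ colA j)^2 <
        (μ * (Real.sqrt (colA i ⬝ᵥ colA i) * Real.sqrt (colA j ⬝ᵥ colA j)))^2 := by
      rw [← sq_abs (colA i ⬝ᵥ colA j)]
      exact pow_lt_pow_left₀ h1 (abs_nonneg _) two_ne_zero
    have h3 : (μ * (Real.sqrt (colA i ⬝ᵥ colA i) * Real.sqrt (colA j ⬝ᵥ colA j)))^2
        = μ^2 * ((colA i ⬝ᵥ colA i) * (colA j ⬝ᵥ colA j)) := by
      rw [mul_pow, mul_pow, Real.sq_sqrt hxx.le, Real.sq_sqrt hyy.le]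
    rw [hG]
    simp only [P0, Matrix.one_mulVec]
    rw [h3] at h2
    linarith
  -- f vanishes at 0
  have f0 : f 0 = 0 := by
    have hxx := dot_self_pos' (hcols i₀)
    have hyy := dot_self_pos' (hcols j₀)
    have h1 : |colA i₀ ⬝ᵥ colA j₀| =
        μ * (Real.sqrt (colA i₀ ⬝ᵥ colA i₀) * Real.sqrt (colA j₀ ⬝ᵥ colA j₀)) := by
      have := hmax
      unfold nip at this
      field_simp at this
      linarith [this]
    have h2 : (colA i₀ ⬝ᵥ colA j₀)^2 =
        μ^2 * ((colA i₀ ⬝ᵥ colA i₀) * (colA j₀ ⬝ᵥ colA j₀)) := by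
      rw [← sq_abs (colA i₀ ⬝ᵥ colA j₀), h1, mul_pow, mul_pow,
        Real.sq_sqrt hxx.le, Real.sq_sqrt hyy.le]
    rw [hf 0]
    simp only [P0, Matrix.one_mulVec]
    rw [← hμdef] at *
    rw [h2]
    ring
  -- eventual negativity of all the G's near 0
  have evG : ∀ᶠ ε in nhds (0:ℝ), ∀ p : {p : Fin n × Fin n // p.1 ≠ p.2},
      (¬(p.1.1 = i₀ ∧ p.1.2 = j₀) → ¬(p.1.1 = j₀ ∧ p.1.2 = i₀) →
        G p.1.1 p.1.2 ε < 0) := by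
    rw [Filter.eventually_all]
    intro p
    by_cases hb1 : p.1.1 = i₀ ∧ p.1.2 = j₀
    · filter_upwards with ε h; exact absurd hb1 h
    by_cases hb2 : p.1.1 = j₀ ∧ p.1.2 = i₀
    · filter_upwards with ε _ h; exact absurd hb2 h
    · have h0 := G0neg p.1.1 p.1.2 p.2 hb1 hb2
      have := ((contG p.1.1 p.1.2).tendsto 0).eventually (eventually_lt_nhds h0)
      filter_upwards [this] with ε hε _ _; exact hε
  have evAbs : ∀ᶠ ε in nhds (0:ℝ), |ε| < 1 := by
    have : Continuous (fun ε : ℝ => |ε|) := continuous_abs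
    have := (this.tendsto 0).eventually (eventually_lt_nhds (by norm_num : |(0:ℝ)| < 1))
    exact this
  -- f is differentiable at 0 with nonzero derivative; slope argument
  have hdiff : DifferentiableAt ℝ f 0 := by
    by_contra h
    exact hderiv (deriv_zero_of_not_differentiableAt h)
  have hslope : Filter.Tendsto (slope f 0) (nhdsWithin 0 {x | x ≠ 0}) (nhds (deriv f 0)) :=
    hasDerivAt_iff_tendsto_slope.mp hdiff.hasDerivAt
  have key : ∃ ε : ℝ, ε ≠ 0 ∧ |ε| < 1 ∧ f ε < 0 ∧
      ∀ p : {p : Fin n × Fin n // p.1 ≠ p.2},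
        (¬(p.1.1 = i₀ ∧ p.1.2 = j₀) → ¬(p.1.1 = j₀ ∧ p.1.2 = i₀) →
          G p.1.1 p.1.2 ε < 0) := by
    have slope_eq : ∀ ε : ℝ, ε ≠ 0 → f ε = slope f 0 ε * ε := by
      intro ε hε
      rw [slope_def_field, f0]
      field_simp
      ring
    rcases hderiv.lt_or_gt with hd | hd
    · -- derivative negative: take ε > 0
      have hmono : nhdsWithin (0:ℝ) (Set.Ioi 0) ≤ nhdsWithin 0 {x | x ≠ 0} :=
        nhdsWithin_mono 0 (fun x hx => ne_of_gt hx)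
      have e1 : ∀ᶠ ε in nhdsWithin (0:ℝ) (Set.Ioi 0), slope f 0 ε < 0 :=
        (hslope.mono_left hmono).eventually (eventually_lt_nhds hd)
      have e2 : ∀ᶠ ε in nhdsWithin (0:ℝ) (Set.Ioi 0), ε ∈ Set.Ioi (0:ℝ) :=
        self_mem_nhdsWithin
      obtain ⟨ε, h1, h2, h3, h4⟩ :=
        (e1.and (e2.and ((evAbs.filter_mono nhdsWithin_le_nhds).and
          (evG.filter_mono nhdsWithin_le_nhds)))).exists
      refine ⟨ε, ne_of_gt h2, h3, ?_, h4⟩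
      rw [slope_eq ε (ne_of_gt h2)]
      exact mul_neg_of_neg_of_pos h1 h2
    · -- derivative positive: take ε < 0
      have hmono : nhdsWithin (0:ℝ) (Set.Iio 0) ≤ nhdsWithin 0 {x | x ≠ 0} :=
        nhdsWithin_mono 0 (fun x hx => ne_of_lt hx)
      have e1 : ∀ᶠ ε in nhdsWithin (0:ℝ) (Set.Iio 0), 0 < slope f 0 ε :=
        (hslope.mono_left hmono).eventually (eventually_gt_nhds hd)
      have e2 : ∀ᶠ ε in nhdsWithin (0:ℝ) (Set.Iio 0), ε ∈ Set.Iio (0:ℝ) :=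
        self_mem_nhdsWithin
      obtain ⟨ε, h1, h2, h3, h4⟩ :=
        (e1.and (e2.and ((evAbs.filter_mono nhdsWithin_le_nhds).and
          (evG.filter_mono nhdsWithin_le_nhds)))).exists
      refine ⟨ε, ne_of_lt h2, h3, ?_, h4⟩
      rw [slope_eq ε (ne_of_lt h2)]
      exact mul_neg_of_pos_of_neg h1 h2
  obtain ⟨ε, hε0, hε1, hfε, hGε⟩ := key
  -- every pair has G value < 0 at ε
  have hGall : ∀ i j : Fin n, i ≠ j → G i j ε < 0 := by
    intro i j hij'
    by_cases hb1 : i = i₀ ∧ j = j₀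
    · obtain ⟨rfl, rfl⟩ := hb1
      have : G i j ε = f ε := by rw [hG, hf ε]
      rw [this]; exact hfε
    by_cases hb2 : i = j₀ ∧ j = i₀
    · have : G i j ε = f ε := by
        rw [hb2.1, hb2.2, hG, hf ε]
        simp only [hcolA]
        rw [dotProduct_comm ((P ε).mulVec fun r => A r j₀) ((P ε).mulVec fun r => A r i₀)]
        ring
      rw [this]; exact hfε
    · exact hGε ⟨(i, j), hij'⟩ hb1 hb2
  -- columns of `P ε * A`
  have hcolB : ∀ j : Fin n, (fun r => (P ε * A) r j) = (P ε).mulVec (colA j) := by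
    intro j
    funext r
    simp [Matrix.mul_apply, Matrix.mulVec, dotProduct]
    rfl
  -- each pairwise nip of `P ε * A` is < μ
  have hnipB : ∀ i j : Fin n, i ≠ j →
      nip ((P ε).mulVec (colA i)) ((P ε).mulVec (colA j)) < μ := by
    intro i j hij'
    have hg := hGall i j hij'
    simp only [hG] at hg
    set X := (P ε).mulVec (colA i) with hX
    set Y := (P ε).mulVec (colA j) with hY
    have hsq : (X ⬝ᵥ Y)^2 < μ^2 * ((X ⬝ᵥ X) * (Y ⬝ᵥ Y)) := by linarith
    have hprodpos : 0 < μ^2 * ((X ⬝ᵥ X) * (Y ⬝ᵥ Y)) :=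
      lt_of_le_of_lt (sq_nonneg _) hsq
    have hXX : 0 < X ⬝ᵥ X := by
      rcases lt_or_eq_of_le (dot_self_nonneg' X) with h | h
      · exact h
      · exfalso; rw [← h, zero_mul, mul_zero] at hprodpos; exact lt_irrefl _ hprodpos
    have hYY : 0 < Y ⬝ᵥ Y := by
      rcases lt_or_eq_of_le (dot_self_nonneg' Y) with h | h
      · exact h
      · exfalso; rw [← h, mul_zero, mul_zero] at hprodpos; exact lt_irrefl _ hprodpos
    have hμpos : 0 < μ := by
      rcases lt_or_eq_of_le hμ0 with h | h
      · exact h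
      · exfalso; rw [← h] at hprodpos; simp at hprodpos
    have habs : |X ⬝ᵥ Y| < μ * (Real.sqrt (X ⬝ᵥ X) * Real.sqrt (Y ⬝ᵥ Y)) := by
      have hrhs : (μ * (Real.sqrt (X ⬝ᵥ X) * Real.sqrt (Y ⬝ᵥ Y)))^2
          = μ^2 * ((X ⬝ᵥ X) * (Y ⬝ᵥ Y)) := by
        rw [mul_pow, mul_pow, Real.sq_sqrt hXX.le, Real.sq_sqrt hYY.le]
      have h2 : |X ⬝ᵥ Y|^2 < (μ * (Real.sqrt (X ⬝ᵥ X) * Real.sqrt (Y ⬝ᵥ Y)))^2 := by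
        rw [sq_abs, hrhs]; exact hsq
      exact abs_lt_of_sq_lt_sq (by rwa [sq_abs] at h2) (by positivity)
    unfold nip
    rw [div_lt_iff₀ (by positivity)]
    linarith
  -- conclude
  have hmain : mutualCoherence (P ε * A) < μ := by
    obtain ⟨pmax, hpmax⟩ := Finite.exists_max
      (fun p : {p : Fin n × Fin n // p.1 ≠ p.2} =>
        nip (fun i => (P ε * A) i p.1.1) (fun i => (P ε * A) i p.1.2))
    have hlt' : nip (fun i => (P ε * A) i pmax.1.1) (fun i => (P ε * A) i pmax.1.2) < μ := by
      rw [show (fun i => (P ε * A) i pmax.1.1) = (P ε).mulVec (colA pmax.1.1) from hcolB _,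
        show (fun i => (P ε * A) i pmax.1.2) = (P ε).mulVec (colA pmax.1.2) from hcolB _]
      exact hnipB _ _ pmax.2
    exact lt_of_le_of_lt (ciSup_le hpmax) hlt'
  refine ⟨⟨ε, hε0, hmain⟩, ?_⟩
  -- essential coherence
  have hdet : (P ε).det ≠ 0 := by
    rw [hP ε]; exact det_Peps' _ _ ε hε1
  set Q : GL (Fin m) ℝ := Matrix.GeneralLinearGroup.mkOfDetNeZero (P ε) hdet with hQ
  have hQcoe : (Q : Matrix (Fin m) (Fin m) ℝ) = P ε := rfl
  have hinf : essMutualCoherence A ≤ mutualCoherence ((Q : Matrix (Fin m) (Fin m) ℝ) * A) := by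
    apply ciInf_le
    refine ⟨0, ?_⟩
    rintro _ ⟨R, rfl⟩
    exact Real.iSup_nonneg fun p => nip_nonneg' _ _
  rw [hQcoe] at hinf
  exact lt_of_le_of_lt hinf hmain
end
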